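/- For every integer k ≥ 2, ∑_{j=0}^{k-1} (-1)^{j+1} (k-j)^{2k-2} C(2k+1, j) = A(2k-2, k-2) - A(2k-2, k-3), where A(n,j) denotes the Eulerian number. -/

import Mathlib

/-- The Eulerian number `A(n, j)`: the number of permutations of `Fin n` with exactly
`j` descents. -/
def eulerian (n j : ℕ) : ℕ :=
  ((Finset.univ : Finset (Equiv.Perm (Fin n))).filter (fun σ =>
    ((Finset.univ : Finset (Fin n)).filter
      (fun i : Fin n => ∃ h : (i : ℕ) + 1 < n, σ ⟨(i : ℕ) + 1, h⟩ < σ i)).card = j)).card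

/-- Eulerian numbers with an integer (possibly negative) second argument. -/
def eulerianZ (n : ℕ) (j : ℤ) : ℤ :=
  if j < 0 then 0 else eulerian n j.toNat

/-!
Inserting a new smallest value into the one-line notation of a permutation of `n` letters keeps
the number of descents when it goes in front or between the two entries of a descent, and adds
one descent otherwise. This gives `A(n+1, m+1) = (m+2) A(n, m+1) + (n-m) A(n, m)`, a recurrence
also satisfied by `∑_{i ≤ m} (-1)^i C(n+1, i) (m+1-i)^n`, so the two agree.

For `n = 2k-2`, Pascal's rule rewrites both sides of the identity as alternating sums against
`C(2k, j)`; they differ by `∑_{j<k} (-1)^j C(2k, j) (k-j)^(2k-2)`. Its summand is symmetric under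
`j ↦ 2k - j` and vanishes at `j = k`, so it is half of the full sum over `j ≤ 2k`, a `2k`-th finite
difference of a polynomial of degree `2k-2`, hence zero.
-/

open Finset

section AlternatingSums

variable {R : Type*} [CommRing R]

theorem alternating_sum_choose_succ_mul (N M : ℕ) (f : ℕ → R) :
    ∑ i ∈ range (M + 1), (-1) ^ i * ((N + 1).choose i : R) * f i =
      ∑ i ∈ range (M + 1), (-1) ^ i * (N.choose i : R) * f i -
        ∑ i ∈ range M, (-1) ^ i * (N.choose i : R) * f (i + 1) := by
  rw [sum_range_succ', sum_range_succ' _ M, eq_sub_iff_add_eq, add_right_comm, ← sum_add_distrib]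
  congr 1
  · refine sum_congr rfl fun i _ => ?_
    rw [Nat.choose_succ_succ', Nat.cast_add, pow_succ]
    ring
  · simp

theorem alternating_sum_choose_mul_sub_pow_eq_zero {d N : ℕ} (h : d < N) (c : R) :
    ∑ j ∈ range (N + 1), (-1) ^ j * (N.choose j : R) * (c - j) ^ d = 0 := by
  have := congr_fun (fwdDiff_iter_pow_eq_zero_of_lt (R := R) h) (c - N)
  rw [fwdDiff_iter_eq_sum_shift, Pi.zero_apply] at this
  rw [← sum_range_reflect, ← this]
  refine sum_congr rfl fun j hj => ?_
  have hj : j ≤ N := Nat.lt_succ_iff.mp (mem_range.mp hj)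
  rw [Nat.add_sub_cancel, Nat.choose_symm hj, Nat.cast_sub hj, zsmul_eq_mul]
  push_cast
  ring

end AlternatingSums

theorem sum_range_two_mul_add_one_eq_of_symm {M : Type*} [AddCommMonoid M] (g : ℕ → M) (K : ℕ)
    (hg : ∀ j ≤ 2 * K, g (2 * K - j) = g j) :
    ∑ j ∈ range (2 * K + 1), g j = 2 • ∑ j ∈ range K, g j + g K := by
  rw [show 2 * K + 1 = K + (K + 1) by omega, sum_range_add, sum_range_succ', two_nsmul, add_zero,
    add_assoc]
  congr 2
  rw [← sum_range_reflect]
  refine sum_congr rfl fun j hj => ?_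
  have := mem_range.mp hj
  rw [← hg _ (by omega)]
  congr 1
  omega

theorem alternating_sum_range_choose_two_mul_mul_sub_pow_eq_zero {K d : ℕ} (hd : Even d)
    (hd0 : d ≠ 0) (hdK : d < 2 * K) :
    ∑ j ∈ range K, (-1) ^ j * ((2 * K).choose j : ℤ) * ((K : ℤ) - j) ^ d = 0 := by
  have hsymm : ∀ j ≤ 2 * K,
      (-1) ^ (2 * K - j) * ((2 * K).choose (2 * K - j) : ℤ) * ((K : ℤ) - (2 * K - j : ℕ)) ^ d =
        (-1) ^ j * ((2 * K).choose j : ℤ) * ((K : ℤ) - j) ^ d := by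
    intro j hj
    have hsign : (-1 : ℤ) ^ (2 * K - j) = (-1) ^ j := by
      rw [neg_one_pow_eq_pow_mod_two, show (2 * K - j) % 2 = j % 2 by omega,
        ← neg_one_pow_eq_pow_mod_two]
    rw [hsign, Nat.choose_symm hj, Nat.cast_sub hj, ← hd.neg_pow]
    push_cast
    ring
  have := sum_range_two_mul_add_one_eq_of_symm
    (fun j => (-1) ^ j * ((2 * K).choose j : ℤ) * ((K : ℤ) - j) ^ d) K hsymm
  rw [alternating_sum_choose_mul_sub_pow_eq_zero hdK, sub_self, zero_pow hd0, mul_zero,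
    add_zero, two_nsmul] at this
  linarith

section Insert

variable {α : Type*}

def insertAt (p : ℕ) (a : α) (s : ℕ → α) (j : ℕ) : α :=
  if j < p then s j else if j = p then a else s (j - 1)

variable {p j : ℕ} {a : α} {s : ℕ → α}

theorem insertAt_of_lt (h : j < p) : insertAt p a s j = s j := if_pos h

theorem insertAt_self : insertAt p a s p = a := by simp [insertAt]

theorem insertAt_succ_of_le (h : p ≤ j) : insertAt p a s (j + 1) = s j := by
  rw [insertAt, if_neg (by omega), if_neg (by omega), Nat.add_sub_cancel]

end Insert

section Descents

variable {α : Type*} [LinearOrder α]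

def descents (s : ℕ → α) (n : ℕ) : Finset ℕ := {j ∈ range (n - 1) | s (j + 1) < s j}

@[simp]
theorem mem_descents {s : ℕ → α} {n j : ℕ} :
    j ∈ descents s n ↔ j + 1 < n ∧ s (j + 1) < s j := by
  rw [descents, mem_filter, mem_range, Nat.lt_sub_iff_add_lt]

theorem descents_subset_range (s : ℕ → α) (n : ℕ) : descents s n ⊆ range n :=
  fun j hj => mem_range.mpr (by have := (mem_descents.mp hj).1; omega)

theorem descents_congr {s t : ℕ → α} {n : ℕ} (h : ∀ j < n, s j = t j) :
    descents s n = descents t n := by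
  ext j
  simp only [mem_descents]
  exact and_congr_right fun hj => by rw [h j (by omega), h (j + 1) hj]

theorem descents_comp_of_strictMono {β : Type*} [LinearOrder β] {g : α → β} (hg : StrictMono g)
    (s : ℕ → α) (n : ℕ) : descents (g ∘ s) n = descents s n := by
  ext j
  simp [hg.lt_iff_lt]

variable {p n j : ℕ} {a : α} {s : ℕ → α}

theorem mem_descents_insertAt_of_lt (hp : p ≤ n) (h : j + 1 < p) :
    j ∈ descents (insertAt p a s) (n + 1) ↔ j ∈ descents s n := by
  simp only [mem_descents, insertAt_of_lt h, insertAt_of_lt (by omega : j < p)]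
  exact and_congr_left' (by omega)

theorem succ_mem_descents_insertAt_iff (h : p ≤ j) :
    j + 1 ∈ descents (insertAt p a s) (n + 1) ↔ j ∈ descents s n := by
  simp only [mem_descents, insertAt_succ_of_le h, insertAt_succ_of_le (by omega : p ≤ j + 1)]
  exact and_congr_left' (by omega)

theorem mem_descents_insertAt_succ (hj : j < n) (ha : a < s j) :
    j ∈ descents (insertAt (j + 1) a s) (n + 1) := by
  rw [mem_descents, insertAt_self, insertAt_of_lt (Nat.lt_succ_self j)]
  exact ⟨by omega, ha⟩

theorem notMem_descents_insertAt_self (ha : ∀ i < n, a < s i) :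
    p ∉ descents (insertAt p a s) (n + 1) := by
  rw [mem_descents, insertAt_self, insertAt_succ_of_le le_rfl]
  exact fun ⟨hp, hlt⟩ => (ha p (by omega)).not_gt hlt

theorem descents_insertAt_zero (ha : ∀ i < n, a < s i) :
    descents (insertAt 0 a s) (n + 1) = (descents s n).map (addRightEmbedding 1) := by
  ext j
  cases j with
  | zero => simpa using notMem_descents_insertAt_self ha
  | succ j => simp [succ_mem_descents_insertAt_iff (Nat.zero_le j)]

def natSuccAbove (r j : ℕ) : ℕ := if j < r then j else j + 1

theorem descents_insertAt_succ {r : ℕ} (hr : r < n) (ha : ∀ i < n, a < s i) :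
    descents (insertAt (r + 1) a s) (n + 1) =
      insert r (((descents s n).erase r).image (natSuccAbove r)) := by
  ext j
  simp only [mem_insert, mem_image, mem_erase]
  constructor
  · intro hj
    rcases lt_trichotomy j r with h | rfl | h
    · exact Or.inr ⟨j, ⟨h.ne, (mem_descents_insertAt_of_lt hr (by omega)).mp hj⟩, if_pos h⟩
    · exact Or.inl rfl
    · obtain ⟨i, rfl⟩ : ∃ i, j = i + 1 := ⟨j - 1, by omega⟩
      have hi : r + 1 ≤ i := by
        rcases (show i = r ∨ r + 1 ≤ i by omega) with rfl | hi
        · exact absurd hj (notMem_descents_insertAt_self ha)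
        · exact hi
      exact Or.inr ⟨i, ⟨by omega, (succ_mem_descents_insertAt_iff hi).mp hj⟩,
        if_neg (by omega)⟩
  · rintro (rfl | ⟨i, ⟨hir, hi⟩, rfl⟩)
    · exact mem_descents_insertAt_succ hr (ha j hr)
    · rcases lt_or_gt_of_ne hir with h | h
      · rw [natSuccAbove, if_pos h]
        exact (mem_descents_insertAt_of_lt hr (by omega)).mpr hi
      · rw [natSuccAbove, if_neg (by omega)]
        exact (succ_mem_descents_insertAt_iff h).mpr hi

theorem card_descents_insertAt_zero (ha : ∀ i < n, a < s i) :
    #(descents (insertAt 0 a s) (n + 1)) = #(descents s n) := by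
  rw [descents_insertAt_zero ha, card_map]

theorem card_descents_insertAt_succ {r : ℕ} (hr : r < n) (ha : ∀ i < n, a < s i) :
    #(descents (insertAt (r + 1) a s) (n + 1)) = #((descents s n).erase r) + 1 := by
  have hinj : Function.Injective (natSuccAbove r) := fun i i' h => by
    simp only [natSuccAbove] at h; split_ifs at h <;> omega
  rw [descents_insertAt_succ hr ha, card_insert_of_notMem, card_image_of_injective _ hinj]
  rw [mem_image]
  rintro ⟨i, -, h⟩
  simp only [natSuccAbove] at h
  split_ifs at h <;> omega

end Descents

namespace Equiv.Perm

variable {n : ℕ}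

def valSeq (σ : Perm (Fin n)) (j : ℕ) : ℕ := if h : j < n then σ ⟨j, h⟩ else 0

theorem card_filter_descent_eq (σ : Perm (Fin n)) :
    #{i : Fin n | ∃ h : (i : ℕ) + 1 < n, σ ⟨(i : ℕ) + 1, h⟩ < σ i} = #(descents σ.valSeq n) := by
  rw [← card_map Fin.valEmbedding]
  congr 1
  ext j
  simp only [mem_map, mem_filter, mem_univ, true_and, Fin.valEmbedding_apply, mem_descents]
  constructor
  · rintro ⟨i, ⟨h, hlt⟩, rfl⟩
    simp [valSeq, h, hlt]
  · rintro ⟨h, hlt⟩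
    simp only [valSeq, dif_pos h, dif_pos (Nat.lt_of_succ_lt h)] at hlt
    exact ⟨⟨j, by omega⟩, ⟨h, hlt⟩, rfl⟩

/-- `cycleRange p` brings position `p` to the front, where `decomposeFin.symm (0, τ)` puts the
new least value `0` and shifts the values of `τ` up by one. -/
def insertZero (τ : Perm (Fin n)) (p : Fin (n + 1)) : Perm (Fin (n + 1)) :=
  decomposeFin.symm (0, τ) * p.cycleRange

theorem val_decomposeFin_symm_zero (τ : Perm (Fin n)) (k : Fin (n + 1)) :
    (decomposeFin.symm (0, τ) k : ℕ) = if (k : ℕ) = 0 then 0 else τ.valSeq (k - 1) + 1 := by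
  cases k using Fin.cases with
  | zero => simp
  | succ k => simp [valSeq]

theorem valSeq_insertZero (τ : Perm (Fin n)) (p : Fin (n + 1)) {j : ℕ} (hj : j < n + 1) :
    (τ.insertZero p).valSeq j = insertAt p 0 (Nat.succ ∘ τ.valSeq) j := by
  rw [valSeq, dif_pos hj, insertZero, mul_apply, val_decomposeFin_symm_zero, insertAt]
  rcases lt_trichotomy j p with h | h | h
  · rw [Fin.coe_cycleRange_of_lt (show (⟨j, hj⟩ : Fin (n + 1)) < p from h), if_pos h]
    simp
  · obtain rfl : (⟨j, hj⟩ : Fin (n + 1)) = p := Fin.ext h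
    simp
  · rw [Fin.cycleRange_of_gt (show p < (⟨j, hj⟩ : Fin (n + 1)) from h)]
    simp only [if_neg (show j ≠ 0 by omega), if_neg (show ¬ j < p by omega),
      if_neg (show j ≠ p by omega), Function.comp_apply, Nat.succ_eq_add_one]

theorem descents_insertZero (τ : Perm (Fin n)) (p : Fin (n + 1)) :
    descents (τ.insertZero p).valSeq (n + 1) =
      descents (insertAt p 0 (Nat.succ ∘ τ.valSeq)) (n + 1) :=
  descents_congr fun _ => valSeq_insertZero τ p

theorem insertZero_apply_self (τ : Perm (Fin n)) (p : Fin (n + 1)) : τ.insertZero p p = 0 := by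
  simp [insertZero]

theorem insertZero_bijective :
    Function.Bijective fun x : Perm (Fin n) × Fin (n + 1) => x.1.insertZero x.2 := by
  refine (Fintype.bijective_iff_injective_and_card _).mpr ⟨?_, ?_⟩
  · rintro ⟨τ, p⟩ ⟨τ', p'⟩ h
    simp only at h
    obtain rfl : p = p' := (τ'.insertZero p').injective <| by
      rw [insertZero_apply_self, ← h, insertZero_apply_self]
    have := decomposeFin.symm.injective (mul_right_cancel h)
    simp_all
  · simp [Fintype.card_perm, Nat.factorial_succ, mul_comm]

theorem card_descents_insertZero_zero (τ : Perm (Fin n)) :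
    #(descents (τ.insertZero 0).valSeq (n + 1)) = #(descents τ.valSeq n) := by
  rw [descents_insertZero, Fin.val_zero,
    card_descents_insertAt_zero (s := Nat.succ ∘ τ.valSeq) fun i _ => Nat.succ_pos _,
    descents_comp_of_strictMono fun _ _ => Nat.succ_lt_succ]

theorem card_descents_insertZero_succ (τ : Perm (Fin n)) (r : Fin n) :
    #(descents (τ.insertZero r.succ).valSeq (n + 1)) = #((descents τ.valSeq n).erase r) + 1 := by
  rw [descents_insertZero, Fin.val_succ,
    card_descents_insertAt_succ (s := Nat.succ ∘ τ.valSeq) r.isLt fun i _ => Nat.succ_pos _,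
    descents_comp_of_strictMono fun _ _ => Nat.succ_lt_succ]

theorem card_filter_card_descents_insertZero (τ : Perm (Fin n)) (m : ℕ) :
    #{p : Fin (n + 1) | #(descents (τ.insertZero p).valSeq (n + 1)) = m} =
      (if #(descents τ.valSeq n) = m then #(descents τ.valSeq n) + 1 else 0) +
        (if #(descents τ.valSeq n) + 1 = m then n - #(descents τ.valSeq n) else 0) := by
  rw [card_filter, Fin.sum_univ_succ]
  simp only [card_descents_insertZero_zero, card_descents_insertZero_succ]
  rw [Fin.sum_univ_eq_sum_range
    (fun r => if #((descents τ.valSeq n).erase r) + 1 = m then 1 else 0)]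
  have hD := descents_subset_range τ.valSeq n
  generalize descents τ.valSeq n = D at hD ⊢
  have hkept : ∑ r ∈ D, (if #(D.erase r) + 1 = m then 1 else 0) =
      ∑ _r ∈ D, if #D = m then 1 else 0 :=
    sum_congr rfl fun r hr => by rw [card_erase_add_one hr]
  have hnew : ∑ r ∈ range n \ D, (if #(D.erase r) + 1 = m then 1 else 0) =
      ∑ _r ∈ range n \ D, if #D + 1 = m then 1 else 0 :=
    sum_congr rfl fun r hr => by rw [erase_eq_of_notMem (mem_sdiff.mp hr).2]
  rw [← sum_sdiff hD, hkept, hnew, sum_const, sum_const, card_sdiff_of_subset hD, card_range,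
    smul_eq_mul, smul_eq_mul]
  split_ifs <;> omega

end Equiv.Perm

open Equiv Equiv.Perm

theorem eulerian_eq_card (n m : ℕ) :
    eulerian n m = #{σ : Perm (Fin n) | #(descents σ.valSeq n) = m} := by
  simp only [eulerian, card_filter_descent_eq]

theorem eulerian_succ (n m : ℕ) :
    eulerian (n + 1) m = ∑ τ : Perm (Fin n),
      ((if #(descents τ.valSeq n) = m then #(descents τ.valSeq n) + 1 else 0) +
        (if #(descents τ.valSeq n) + 1 = m then n - #(descents τ.valSeq n) else 0)) := by
  rw [eulerian_eq_card, card_filter,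
    ← Fintype.sum_bijective _ insertZero_bijective _ _ fun _ => rfl, Fintype.sum_prod_type]
  simp only [← card_filter, card_filter_card_descents_insertZero]

theorem eulerian_succ_zero (n : ℕ) : eulerian (n + 1) 0 = eulerian n 0 := by
  rw [eulerian_succ, eulerian_eq_card, card_filter]
  refine sum_congr rfl fun τ _ => ?_
  rw [if_neg (Nat.succ_ne_zero _), add_zero]
  split_ifs <;> omega

theorem eulerian_succ_succ (n m : ℕ) :
    eulerian (n + 1) (m + 1) = (m + 2) * eulerian n (m + 1) + (n - m) * eulerian n m := by
  rw [eulerian_succ, eulerian_eq_card, eulerian_eq_card, card_filter, card_filter, mul_sum,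
    mul_sum, ← sum_add_distrib]
  refine sum_congr rfl fun τ _ => ?_
  split_ifs <;> omega

theorem eulerian_eq_zero_of_lt {n m : ℕ} (h : n < m) : eulerian n m = 0 := by
  rw [eulerian_eq_card, card_eq_zero, filter_eq_empty_iff]
  intro σ _ hσ
  have := card_le_card (descents_subset_range σ.valSeq n)
  rw [card_range] at this
  omega

theorem eulerian_zero_left (m : ℕ) : eulerian 0 m = if m = 0 then 1 else 0 := by
  rcases m with _ | m
  · decide
  · exact eulerian_eq_zero_of_lt m.succ_pos

theorem natCast_choose_succ_right_eq {N t : ℕ} :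
    (N.choose (t + 1) : ℤ) * (t + 1) = N.choose t * ((N : ℤ) - t) := by
  rcases le_or_gt t N with h | h
  · rw [← Nat.cast_sub h]; exact_mod_cast Nat.choose_succ_right_eq N t
  · simp [Nat.choose_eq_zero_of_lt h, Nat.choose_eq_zero_of_lt (Nat.lt_succ_of_lt h)]

def eulerianSum (n m : ℕ) : ℤ :=
  ∑ i ∈ range (m + 1), (-1) ^ i * ((n + 1).choose i : ℤ) * ((m : ℤ) + 1 - i) ^ n

theorem eulerianSum_zero_right (n : ℕ) : eulerianSum n 0 = 1 := by
  simp [eulerianSum]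

theorem eulerianSum_zero_left (m : ℕ) : eulerianSum 0 m = if m = 0 then 1 else 0 := by
  simp only [eulerianSum, pow_zero, mul_one, Int.alternating_sum_range_choose_eq_choose]
  rcases m with _ | m <;> simp

theorem eulerianSum_succ_sub (n m : ℕ) :
    eulerianSum n (m + 1) - eulerianSum n m =
      ∑ i ∈ range (m + 2), (-1) ^ i * ((n + 2).choose i : ℤ) * ((m : ℤ) + 2 - i) ^ n := by
  rw [alternating_sum_choose_succ_mul, eulerianSum, eulerianSum]
  congr 1
  refine sum_congr rfl fun i _ => ?_
  push_cast
  ring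

theorem eulerianSum_succ_succ (n m : ℕ) :
    eulerianSum (n + 1) (m + 1) =
      (m + 2) * eulerianSum n (m + 1) + ((n : ℤ) - m) * eulerianSum n m := by
  -- Pascal's rule on `C(n+2, i)`, then `i C(n+1, i) = (n+2-i) C(n+1, i-1)` to shift an index.
  have hsplit :
      ∑ i ∈ range (m + 2), (-1) ^ i * ((n + 1).choose i : ℤ) * ((m : ℤ) + 2 - i) ^ (n + 1) =
      (m + 2) * eulerianSum n (m + 1) -
        ∑ i ∈ range (m + 2), (-1) ^ i * ((n + 1).choose i : ℤ) * i * ((m : ℤ) + 2 - i) ^ n := by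
    rw [eulerianSum, mul_sum, ← sum_sub_distrib]
    refine sum_congr rfl fun i _ => ?_
    push_cast
    ring
  have hshift : ∑ i ∈ range (m + 2), (-1) ^ i * ((n + 1).choose i : ℤ) * i * ((m : ℤ) + 2 - i) ^ n =
      -∑ i ∈ range (m + 1),
        (-1) ^ i * ((n + 1).choose i : ℤ) * ((n : ℤ) + 1 - i) * ((m : ℤ) + 1 - i) ^ n := by
    rw [sum_range_succ', ← sum_neg_distrib, Nat.cast_zero, mul_zero, zero_mul, add_zero]
    refine sum_congr rfl fun i _ => ?_
    have := natCast_choose_succ_right_eq (N := n + 1) (t := i)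
    push_cast at this ⊢
    linear_combination (-(-1) ^ i * ((m : ℤ) + 1 - i) ^ n) * this
  have hrest : ∑ i ∈ range (m + 1),
        (-1) ^ i * ((n + 1).choose i : ℤ) * ((n : ℤ) + 1 - i) * ((m : ℤ) + 1 - i) ^ n -
      ∑ i ∈ range (m + 1),
        (-1) ^ i * ((n + 1).choose i : ℤ) * ((m : ℤ) + 2 - (i + 1 : ℕ)) ^ (n + 1) =
      ((n : ℤ) - m) * eulerianSum n m := by
    rw [eulerianSum, mul_sum, ← sum_sub_distrib]
    refine sum_congr rfl fun i _ => ?_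
    push_cast
    ring
  rw [eulerianSum, alternating_sum_choose_succ_mul]
  push_cast at hsplit hrest ⊢
  simp only [add_assoc, one_add_one_eq_two] at hsplit hrest hshift ⊢
  linear_combination hsplit - hshift + hrest

theorem eulerian_eq_eulerianSum (n m : ℕ) : (eulerian n m : ℤ) = eulerianSum n m := by
  induction n generalizing m with
  | zero => rw [eulerian_zero_left, eulerianSum_zero_left]; split_ifs <;> rfl
  | succ n ih =>
    rcases m with _ | m
    · rw [eulerian_succ_zero, ih, eulerianSum_zero_right, eulerianSum_zero_right]
    · rw [eulerian_succ_succ, eulerianSum_succ_succ, ← ih, ← ih]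
      rcases le_or_gt m n with h | h
      · push_cast [h]
        ring
      · simp [eulerian_eq_zero_of_lt h, Nat.sub_eq_zero_of_le h.le]

theorem eulerianZ_natCast (n m : ℕ) : eulerianZ n m = eulerian n m := by
  simp [eulerianZ]

theorem eulerianZ_sub_eulerianZ_sub_one (n m : ℕ) :
    eulerianZ n m - eulerianZ n ((m : ℤ) - 1) =
      ∑ i ∈ range (m + 1), (-1) ^ i * ((n + 2).choose i : ℤ) * ((m : ℤ) + 1 - i) ^ n := by
  rcases m with _ | m
  · simp [eulerianZ, eulerian_eq_eulerianSum, eulerianSum_zero_right]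
  · rw [show ((m + 1 : ℕ) : ℤ) - 1 = m by push_cast; ring, eulerianZ_natCast, eulerianZ_natCast,
      eulerian_eq_eulerianSum, eulerian_eq_eulerianSum, eulerianSum_succ_sub]
    refine sum_congr rfl fun i _ => ?_
    push_cast
    ring

/-- For `k ≥ 2`,
`∑_{j=0}^{k-1} (-1)^(j+1) (k-j)^(2k-2) C(2k+1, j) = A(2k-2, k-2) - A(2k-2, k-3)`. -/
theorem stmt_11 (k : ℕ) (hk : 2 ≤ k) :
    ∑ j ∈ Finset.range k,
        (-1 : ℤ) ^ (j + 1) * ((k : ℤ) - j) ^ (2 * k - 2) * ((2 * k + 1).choose j) =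
      eulerianZ (2 * k - 2) ((k : ℤ) - 2) - eulerianZ (2 * k - 2) ((k : ℤ) - 3) := by
  obtain ⟨m, rfl⟩ : ∃ m, k = m + 2 := ⟨k - 2, by omega⟩
  have hpascal := alternating_sum_choose_succ_mul (2 * m + 4) (m + 1)
    fun j => ((m : ℤ) + 2 - j) ^ (2 * m + 2)
  have hhalf := alternating_sum_range_choose_two_mul_mul_sub_pow_eq_zero (K := m + 2)
    (d := 2 * m + 2) ⟨m + 1, by ring⟩ (by omega) (by omega)
  rw [show 2 * (m + 2) = 2 * m + 4 by ring] at hhalf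
  push_cast at hhalf
  rw [hhalf, zero_sub] at hpascal
  rw [show 2 * (m + 2) - 2 = 2 * m + 2 by omega, show 2 * (m + 2) + 1 = 2 * m + 4 + 1 by ring,
    show ((m + 2 : ℕ) : ℤ) - 3 = (m : ℤ) - 1 by push_cast; ring,
    show ((m + 2 : ℕ) : ℤ) - 2 = m by push_cast; ring, eulerianZ_sub_eulerianZ_sub_one]
  calc _ = -∑ i ∈ range (m + 1 + 1),
          (-1) ^ i * ((2 * m + 4 + 1).choose i : ℤ) * ((m : ℤ) + 2 - i) ^ (2 * m + 2) := by
        rw [← sum_neg_distrib]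
        refine sum_congr rfl fun i _ => ?_
        push_cast
        ring
    _ = _ := by
        rw [hpascal, neg_neg]
        refine sum_congr rfl fun i _ => ?_
        push_cast
        ring
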